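/- Second step of the singular-part recursion, case 3 (justification of continuing the search): assume A = Φ * Ψ in AddMonoidAlgebra ℝ ℝ with data as in the context and N ≥ 2, L ≥ 2, K ≥ 2. If β₂ = ζ₁ + κ₂ and α₂ = φ₁·ψ₂, then ζ₂ + κ₁ > β₂; consequently ζ₂ + κ₁ belongs to the support of A and equals βₙ for some index n ≥ 3. -/

import Mathlib

/-!
Since all `φₗ, ψₖ` are positive, the convolution `Φ * Ψ` has no cancellation: its coefficient at
`x` is at least the sum of `φₗ ψₖ` over any set of representations `x = ζₗ + κₖ`. Hence every
`ζₗ + κₖ` lies in the support of `A`, i.e. among the `βₙ`. As `ζ₁ + κ₁ < ζ₂ + κ₁`, the latter is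
some `βₙ` with `n ≥ 2`; and `n = 2` is impossible, for then `β₂ = ζ₁ + κ₂ = ζ₂ + κ₁` and the
coefficient `α₂` of `A` at `β₂` would be at least `φ₁ψ₂ + φ₂ψ₁ > φ₁ψ₂`.
-/

namespace AddMonoidAlgebra

open Finset

variable {R G ι : Type*} [Semiring R] [Fintype ι]

theorem coeff_sum_single_apply_of_injective {β : ι → G} (hβ : Function.Injective β)
    (α : ι → R) (i : ι) : (∑ j, single (β j) (α j)).coeff (β i) = α i := by
  classical
  simp [Finsupp.finsetSum_apply, Finsupp.single_apply, hβ.eq_iff]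

theorem mem_range_of_coeff_sum_single_ne_zero {β : ι → G} {α : ι → R} {x : G}
    (hx : (∑ j, single (β j) (α j)).coeff x ≠ 0) : x ∈ Set.range β := by
  classical
  contrapose! hx
  simp only [coeff_sum, coeff_single, Finsupp.finsetSum_apply, Finsupp.single_apply]
  exact sum_eq_zero fun j _ => if_neg fun h => hx ⟨j, h⟩

variable [PartialOrder R] [IsOrderedRing R]

theorem coeff_sum_single_nonneg {β : ι → G} {α : ι → R} (hα : ∀ i, 0 ≤ α i) (x : G) :
    0 ≤ (∑ j, single (β j) (α j)).coeff x := by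
  classical
  simp only [coeff_sum, coeff_single, Finsupp.finsetSum_apply, Finsupp.single_apply]
  exact sum_nonneg fun j _ => by split_ifs <;> simp [hα j]

theorem sum_le_coeff_mul_of_nonneg [Add G] {f g : R[G]} (hf : ∀ a, 0 ≤ f.coeff a)
    (hg : ∀ b, 0 ≤ g.coeff b) {x : G} (s : Finset (G × G)) (hs : ∀ p ∈ s, p.1 + p.2 = x) :
    ∑ p ∈ s, f.coeff p.1 * g.coeff p.2 ≤ (f * g).coeff x := by
  classical
  set T := (f.coeff.support ×ˢ g.coeff.support).filter fun p => p.1 + p.2 = x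
  have hT : (f * g).coeff x = ∑ p ∈ T, f.coeff p.1 * g.coeff p.2 := by
    rw [coeff_mul, Finsupp.sum, sum_filter, sum_product]
    rfl
  have hsT : ∑ p ∈ s, f.coeff p.1 * g.coeff p.2 ≤ ∑ p ∈ s ∪ T, f.coeff p.1 * g.coeff p.2 :=
    sum_le_sum_of_subset_of_nonneg subset_union_left fun p _ _ => mul_nonneg (hf _) (hg _)
  refine hsT.trans_eq (hT ▸ (sum_subset subset_union_right fun p hp hpT => ?_).symm)
  have hpx : p.1 + p.2 = x := (mem_union.mp hp).elim (hs p) fun h => (mem_filter.mp h).2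
  simp only [T, mem_filter, mem_product, Finsupp.mem_support_iff, hpx, and_true, not_and_or,
    not_not] at hpT
  rcases hpT with h | h <;> simp [h]

end AddMonoidAlgebra

open AddMonoidAlgebra

/-- Second step of the singular-part recursion, case 3 (justification of
continuing the search): if `A = Φ * Ψ` with the leaf-peeling singular data,
`β₂ = ζ₁ + κ₂` and `α₂ = φ₁·ψ₂`, then `ζ₂ + κ₁ > β₂`; consequently `ζ₂ + κ₁`
belongs to the support of `A` and equals `βₙ` for some index `n ≥ 3`
(i.e. some zero-based index `n` with `2 ≤ n`). -/
theorem singular_recursion_second_step_case3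
    (N L K : ℕ) (hN : 2 ≤ N) (hL : 2 ≤ L) (hK : 2 ≤ K)
    (β : Fin N → ℝ) (ζ : Fin L → ℝ) (κ : Fin K → ℝ)
    (hβ : StrictMono β) (hζ : StrictMono ζ) (hκ : StrictMono κ)
    (α : Fin N → ℝ) (φ : Fin L → ℝ) (ψ : Fin K → ℝ)
    (hφ : ∀ l, 0 < φ l) (hψ : ∀ k, 0 < ψ k)
    (A Φ Ψ : AddMonoidAlgebra ℝ ℝ)
    (hA : A = ∑ n, AddMonoidAlgebra.single (β n) (α n))
    (hΦ : Φ = ∑ l, AddMonoidAlgebra.single (ζ l) (φ l))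
    (hΨ : Ψ = ∑ k, AddMonoidAlgebra.single (κ k) (ψ k))
    (hSing : A = Φ * Ψ)
    (hcase : β ⟨1, hN⟩ = ζ ⟨0, by omega⟩ + κ ⟨1, hK⟩)
    (hcase' : α ⟨1, hN⟩ = φ ⟨0, by omega⟩ * ψ ⟨1, hK⟩) :
    ζ ⟨1, hL⟩ + κ ⟨0, by omega⟩ > β ⟨1, hN⟩ ∧
      ζ ⟨1, hL⟩ + κ ⟨0, by omega⟩ ∈ A.coeff.support ∧
      ∃ n : Fin N, 2 ≤ (n : ℕ) ∧ ζ ⟨1, hL⟩ + κ ⟨0, by omega⟩ = β n := by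
  have hΦ_nonneg : ∀ a, 0 ≤ Φ.coeff a := hΦ ▸ coeff_sum_single_nonneg fun l => (hφ l).le
  have hΨ_nonneg : ∀ b, 0 ≤ Ψ.coeff b := hΨ ▸ coeff_sum_single_nonneg fun k => (hψ k).le
  have hΦζ : ∀ l, Φ.coeff (ζ l) = φ l := hΦ ▸ coeff_sum_single_apply_of_injective hζ.injective φ
  have hΨκ : ∀ k, Ψ.coeff (κ k) = ψ k := hΨ ▸ coeff_sum_single_apply_of_injective hκ.injective ψ
  have hA_pos : ∀ l k, 0 < A.coeff (ζ l + κ k) := fun l k => by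
    have := sum_le_coeff_mul_of_nonneg hΦ_nonneg hΨ_nonneg {(ζ l, κ k)} (x := ζ l + κ k) (by simp)
    rw [Finset.sum_singleton, hΦζ, hΨκ] at this
    exact hSing ▸ (mul_pos (hφ l) (hψ k)).trans_le this
  have hA_range : ∀ l k, ∃ n, β n = ζ l + κ k := fun l k =>
    mem_range_of_coeff_sum_single_ne_zero (hA ▸ (hA_pos l k).ne')
  obtain ⟨m, hm⟩ := hA_range ⟨0, by omega⟩ ⟨0, by omega⟩
  obtain ⟨n, hn⟩ := hA_range ⟨1, hL⟩ ⟨0, by omega⟩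
  have hζ01 : ζ ⟨0, by omega⟩ < ζ ⟨1, hL⟩ := hζ (Fin.mk_lt_mk.mpr one_pos)
  have hmn : m < n := hβ.lt_iff_lt.mp (by linarith)
  have hn1 : (n : ℕ) ≠ 1 := fun h => by
    obtain rfl : n = ⟨1, hN⟩ := Fin.ext h
    have hle := sum_le_coeff_mul_of_nonneg hΦ_nonneg hΨ_nonneg
      {(ζ ⟨0, by omega⟩, κ ⟨1, hK⟩), (ζ ⟨1, hL⟩, κ ⟨0, by omega⟩)} (x := β ⟨1, hN⟩)
      (by simp [← hcase, ← hn])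
    rw [Finset.sum_pair (by simp [hζ01.ne]), hΦζ, hΦζ, hΨκ, hΨκ, ← hSing, hA,
      coeff_sum_single_apply_of_injective hβ.injective, hcase'] at hle
    linarith [mul_pos (hφ ⟨1, hL⟩) (hψ ⟨0, by omega⟩)]
  have hn2 : 2 ≤ (n : ℕ) := by have : (m : ℕ) < n := hmn; omega
  refine ⟨hn ▸ hβ (Fin.mk_lt_mk.mpr (by omega) : (⟨1, hN⟩ : Fin N) < n), ?_, n, hn2, hn.symm⟩
  exact Finsupp.mem_support_iff.mpr (hA_pos _ _).ne'
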